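/- Let V : ℝⁿ → ℝ ∪ {+∞} be proper lsc and x₀ ∈ dom V. Suppose x : [0,∞) → ℝⁿ is continuous with x(0) = x₀, right-differentiable at 0 with derivative d ∈ ℝⁿ, and e^{at}V(x(t)) + ∫₀ᵗ W(x(τ))dτ ≤ V(x₀) for all t ≥ 0, where W : ℝⁿ → [0,+∞] is lsc and a ≥ 0. Then the contingent directional derivative satisfies V′(x₀; d) ≤ −aV(x₀) − W(x₀); consequently σ_{∂_F V(x₀)}(d) ≤ −aV(x₀) − W(x₀). -/

import Mathlib

/-!
Along the trajectory, `V (x t) ≤ e^{-at} (V x₀ - ∫₀ᵗ W (x τ) dτ)`, and lower semicontinuity of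
`W ∘ x` at `0⁺` gives `∫₀ᵗ W (x τ) dτ ≥ c t` for small `t > 0` whenever `c < W x₀`. Hence the
difference quotients of `V` along the curve, whose secant directions tend to `d`, are eventually
at most `t⁻¹ (e^{-at} - 1) V x₀ - e^{-at} c → -a V x₀ - c`, and the contingent derivative, a
liminf over all directions near `d`, is bounded by the same quantity. Every Fréchet subgradient
`ξ` satisfies `⟪ξ, d⟫ ≤ V′(x₀; d)`, which gives the bound on the support function.
-/

open Filter Topology MeasureTheory
open scoped RealInnerProductSpace ENNReal

variable {n : ℕ}

/-- Fréchet subdifferential of an extended-real-valued function. -/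
def frechetSubdiffE (φ : EuclideanSpace ℝ (Fin n) → EReal) (x : EuclideanSpace ℝ (Fin n)) :
    Set (EuclideanSpace ℝ (Fin n)) :=
  {ξ | ∀ ε > (0 : ℝ), ∃ δ > (0 : ℝ), ∀ y, ‖y - x‖ ≤ δ →
    φ x + ((⟪ξ, y - x⟫ - ε * ‖y - x‖ : ℝ) : EReal) ≤ φ y}

/-- The contingent directional derivative
`φ′(x;v) := liminf_{t→0⁺, w→v} (φ(x+tw) − φ(x))/t`. -/
noncomputable def contingentDeriv (φ : EuclideanSpace ℝ (Fin n) → EReal)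
    (x v : EuclideanSpace ℝ (Fin n)) : EReal :=
  Filter.liminf (fun p : ℝ × EuclideanSpace ℝ (Fin n) =>
      ((p.1⁻¹ : ℝ) : EReal) * (φ (x + p.1 • p.2) - φ x))
    ((𝓝[>] (0 : ℝ)) ×ˢ 𝓝 v)

namespace EReal

lemma le_coe_sub_of_forall_coe_lt {L w : EReal} {b : ℝ}
    (h : ∀ c : ℝ, (c : EReal) < w → L ≤ ((b - c : ℝ) : EReal)) : L ≤ (b : EReal) - w := by
  refine le_of_forall_gt_imp_ge_of_dense fun z hz => ?_
  induction z with
  | bot => exact absurd hz not_lt_bot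
  | top => exact le_top
  | coe r =>
    have hbw : (b : EReal) < r + w := (sub_lt_iff (.inr (coe_ne_bot b)) (.inr (coe_ne_top b))).1 hz
    simpa using h (b - r) (by simpa using sub_lt_of_lt_add' hbw)

lemma le_coe_div_of_coe_mul_add_le {e s v : ℝ} {y : EReal} (he : 0 < e)
    (h : (e : EReal) * y + s ≤ v) : y ≤ ((v - s) / e : ℝ) := by
  induction y with
  | bot => exact bot_le
  | top =>
    rw [coe_mul_top_of_pos he, top_add_coe] at h
    exact absurd h (not_le.2 (coe_lt_top v))
  | coe r =>
    norm_cast at h ⊢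
    rw [le_div_iff₀ he]
    linarith

lemma inv_mul_sub_coe_le {t r v : ℝ} {y : EReal} (ht : 0 < t) (h : y ≤ ((v + t * r : ℝ) : EReal)) :
    ((t⁻¹ : ℝ) : EReal) * (y - v) ≤ r := by
  induction y with
  | bot => simp [coe_mul_bot_of_pos (inv_pos.2 ht)]
  | top => exact absurd h (not_le.2 (coe_lt_top _))
  | coe y =>
    norm_cast at h ⊢
    rw [inv_mul_le_iff₀ ht]
    linarith

lemma coe_le_inv_mul_sub {t r v : ℝ} {y : EReal} (ht : 0 < t) (h : ((v + t * r : ℝ) : EReal) ≤ y) :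
    (r : EReal) ≤ ((t⁻¹ : ℝ) : EReal) * (y - v) := by
  induction y with
  | bot => exact absurd h (not_le.2 (bot_lt_coe _))
  | top => simp [coe_mul_top_of_pos (inv_pos.2 ht)]
  | coe y =>
    norm_cast at h ⊢
    rw [le_inv_mul_iff₀ ht]
    linarith

end EReal

lemma tendsto_inv_mul_exp_mul_sub_one (b : ℝ) :
    Tendsto (fun t : ℝ => t⁻¹ * (Real.exp (b * t) - 1)) (𝓝[≠] 0) (𝓝 b) := by
  have hder : HasDerivAt (fun t : ℝ => Real.exp (b * t)) b 0 := by
    simpa using ((hasDerivAt_id (0 : ℝ)).const_mul b).exp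
  refine (hasDerivAt_iff_tendsto_slope.1 hder).congr fun t => ?_
  simp [slope_def_field, div_eq_inv_mul]

lemma eventually_coe_mul_le_setLIntegral_Ioc {f : ℝ → ℝ≥0∞}
    (hf : LowerSemicontinuousWithinAt f (Set.Ioi 0) 0) {c : ℝ} (hc : (c : EReal) < f 0) :
    ∀ᶠ t in 𝓝[>] 0, ((c * t : ℝ) : EReal) ≤ ((∫⁻ τ in Set.Ioc 0 t, f τ : ℝ≥0∞) : EReal) := by
  rcases le_or_gt c 0 with hc0 | hc0
  · filter_upwards [self_mem_nhdsWithin] with t (ht : 0 < t)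
    exact (EReal.coe_nonpos.2 (mul_nonpos_of_nonpos_of_nonneg hc0 ht.le)).trans
      (EReal.coe_ennreal_nonneg _)
  have hcf : ENNReal.ofReal c < f 0 := by
    rwa [← EReal.coe_ennreal_lt_coe_ennreal_iff, EReal.coe_ennreal_ofReal, max_eq_left hc0.le]
  obtain ⟨u, hu, hsub⟩ := mem_nhdsGT_iff_exists_Ioo_subset.1 (hf _ hcf)
  filter_upwards [Ioo_mem_nhdsGT hu] with t ht
  have hbound : ENNReal.ofReal (c * t) ≤ ∫⁻ τ in Set.Ioc 0 t, f τ :=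
    calc ENNReal.ofReal (c * t) = ∫⁻ _ in Set.Ioc (0 : ℝ) t, ENNReal.ofReal c := by
          rw [setLIntegral_const, Real.volume_Ioc, sub_zero, ENNReal.ofReal_mul hc0.le]
      _ ≤ ∫⁻ τ in Set.Ioc 0 t, f τ := setLIntegral_mono' measurableSet_Ioc fun τ hτ =>
          (hsub ⟨hτ.1, hτ.2.trans_lt ht.2⟩).le
  calc ((c * t : ℝ) : EReal) ≤ ((ENNReal.ofReal (c * t) : ℝ≥0∞) : EReal) := by
        rw [EReal.coe_ennreal_ofReal]; exact_mod_cast le_max_left _ _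
    _ ≤ _ := EReal.coe_ennreal_le_coe_ennreal_iff.2 hbound

lemma contingentDeriv_le_liminf_of_hasDerivWithinAt (φ : EuclideanSpace ℝ (Fin n) → EReal)
    {x : ℝ → EuclideanSpace ℝ (Fin n)} {x₀ d : EuclideanSpace ℝ (Fin n)} (hx0 : x 0 = x₀)
    (hd : HasDerivWithinAt x d (Set.Ici 0) 0) :
    contingentDeriv φ x₀ d ≤
      liminf (fun t : ℝ => ((t⁻¹ : ℝ) : EReal) * (φ (x t) - φ x₀)) (𝓝[>] 0) := by
  set m : ℝ → ℝ × EuclideanSpace ℝ (Fin n) := fun t => (t, t⁻¹ • (x t - x₀))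
  have hslope : Tendsto (fun t : ℝ => t⁻¹ • (x t - x₀)) (𝓝[>] 0) (𝓝 d) := by
    rw [hasDerivWithinAt_iff_tendsto_slope, Set.Ici_sdiff_left] at hd
    refine hd.congr fun t => ?_
    rw [slope_def_module, sub_zero, hx0]
  calc contingentDeriv φ x₀ d
      ≤ liminf (fun p : ℝ × EuclideanSpace ℝ (Fin n) =>
          ((p.1⁻¹ : ℝ) : EReal) * (φ (x₀ + p.1 • p.2) - φ x₀)) (map m (𝓝[>] 0)) :=
        liminf_le_liminf_of_le (tendsto_id.prodMk hslope)
    _ = _ := by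
        refine (liminf_comp _ _ _).symm.trans (liminf_congr ?_)
        filter_upwards [self_mem_nhdsWithin] with t (ht : 0 < t)
        simp [m, smul_smul, ht.ne']

lemma coe_inner_le_contingentDeriv_of_mem_frechetSubdiffE {φ : EuclideanSpace ℝ (Fin n) → EReal}
    {x₀ ξ : EuclideanSpace ℝ (Fin n)} {v₀ : ℝ} (hv₀ : φ x₀ = v₀) (hξ : ξ ∈ frechetSubdiffE φ x₀)
    (d : EuclideanSpace ℝ (Fin n)) : ((⟪ξ, d⟫ : ℝ) : EReal) ≤ contingentDeriv φ x₀ d := by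
  have hε : ∀ ε > (0 : ℝ), ((⟪ξ, d⟫ - ε * ‖d‖ : ℝ) : EReal) ≤ contingentDeriv φ x₀ d := by
    intro ε hε
    obtain ⟨δ, hδ, hsub⟩ := hξ ε hε
    have hlim : Tendsto (fun p : ℝ × EuclideanSpace ℝ (Fin n) =>
        ((⟪ξ, p.2⟫ - ε * ‖p.2‖ : ℝ) : EReal)) ((𝓝[>] 0) ×ˢ 𝓝 d)
        (𝓝 ((⟪ξ, d⟫ - ε * ‖d‖ : ℝ) : EReal)) :=
      (continuous_coe_real_ereal.tendsto _).comp <|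
        (((continuous_const.inner continuous_id).sub
          (continuous_const.mul continuous_norm)).tendsto d).comp tendsto_snd
    rw [← hlim.liminf_eq]
    refine liminf_le_liminf ?_
    have hsmall : Tendsto (fun p : ℝ × EuclideanSpace ℝ (Fin n) => p.1 • p.2)
        ((𝓝[>] 0) ×ˢ 𝓝 d) (𝓝 0) := by
      simpa using (tendsto_fst.mono_right nhdsWithin_le_nhds).smul
        (tendsto_snd (f := 𝓝[>] (0 : ℝ)) (g := 𝓝 d))
    filter_upwards [hsmall.eventually (Metric.closedBall_mem_nhds 0 hδ),
      tendsto_fst.eventually self_mem_nhdsWithin] with p hp (ht : 0 < p.1)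
    have hineq := hsub (x₀ + p.1 • p.2) (by simpa using hp)
    rw [hv₀] at hineq ⊢
    refine EReal.coe_le_inv_mul_sub ht (le_of_eq_of_le ?_ hineq)
    rw [add_sub_cancel_left, real_inner_smul_right, norm_smul, Real.norm_of_nonneg ht.le,
      ← EReal.coe_add]
    ring_nf
  have hlim : Tendsto (fun ε : ℝ => ((⟪ξ, d⟫ - ε * ‖d‖ : ℝ) : EReal)) (𝓝[>] 0)
      (𝓝 ((⟪ξ, d⟫ : ℝ) : EReal)) := by
    refine ((continuous_coe_real_ereal.tendsto _).comp ?_).mono_left nhdsWithin_le_nhds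
    simpa using (continuous_const.sub (continuous_id.mul continuous_const)).tendsto (0 : ℝ)
      (f := fun ε : ℝ => ⟪ξ, d⟫ - ε * ‖d‖)
  exact le_of_tendsto hlim (eventually_nhdsWithin_of_forall hε)

theorem contingentDeriv_le_of_exp_mul_add_setLIntegral_le {V : EuclideanSpace ℝ (Fin n) → EReal}
    {W : EuclideanSpace ℝ (Fin n) → ℝ≥0∞} {x : ℝ → EuclideanSpace ℝ (Fin n)}
    {x₀ d : EuclideanSpace ℝ (Fin n)} {a v₀ : ℝ} (hv₀ : V x₀ = v₀)
    (hW : LowerSemicontinuousAt W x₀) (hx0 : x 0 = x₀) (hd : HasDerivWithinAt x d (Set.Ici 0) 0)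
    (hlyap : ∀ᶠ t in 𝓝[>] 0,
      (Real.exp (a * t) : EReal) * V (x t) + ((∫⁻ τ in Set.Ioc 0 t, W (x τ)) : ℝ≥0∞) ≤ V x₀) :
    contingentDeriv V x₀ d ≤ ((-(a * v₀) : ℝ) : EReal) - W x₀ := by
  refine EReal.le_coe_sub_of_forall_coe_lt fun c hc => ?_
  -- `V (x t) ≤ e^{-at} (v₀ - c t) = v₀ + t G t`
  set G : ℝ → ℝ := fun t => t⁻¹ * (Real.exp (-a * t) - 1) * v₀ - Real.exp (-a * t) * c
  have hG : Tendsto G (𝓝[>] 0) (𝓝 (-(a * v₀) - c)) := by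
    have hexp : Tendsto (fun t : ℝ => Real.exp (-a * t)) (𝓝[>] 0) (𝓝 1) := by
      have h := ((continuous_const_mul (-a)).rexp.tendsto (0 : ℝ))
      rw [mul_zero, Real.exp_zero] at h
      exact h.mono_left nhdsWithin_le_nhds
    have h := (((tendsto_inv_mul_exp_mul_sub_one (-a)).mono_left
      (nhdsWithin_mono _ fun t (ht : t ∈ Set.Ioi 0) => ht.ne')).mul_const v₀).sub
      (hexp.mul_const c)
    rwa [one_mul, neg_mul] at h
  have hWx : LowerSemicontinuousWithinAt (W ∘ x) (Set.Ioi 0) 0 :=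
    ((hx0 ▸ hW).lowerSemicontinuousWithinAt Set.univ).comp
      (hd.continuousWithinAt.mono Set.Ioi_subset_Ici_self) (Set.mapsTo_univ _ _)
  have hquot : ∀ᶠ t in 𝓝[>] 0, ((t⁻¹ : ℝ) : EReal) * (V (x t) - V x₀) ≤ G t := by
    filter_upwards [eventually_coe_mul_le_setLIntegral_Ioc hWx (by simpa [hx0] using hc), hlyap,
      self_mem_nhdsWithin] with t hct hlt (ht : 0 < t)
    rw [hv₀] at hlt ⊢
    refine EReal.inv_mul_sub_coe_le ht ((EReal.le_coe_div_of_coe_mul_add_le (Real.exp_pos _)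
      ((add_le_add le_rfl hct).trans hlt)).trans_eq ?_)
    simp only [G, neg_mul, Real.exp_neg]
    congr 1
    field_simp
    ring
  calc contingentDeriv V x₀ d
      ≤ liminf (fun t : ℝ => ((t⁻¹ : ℝ) : EReal) * (V (x t) - V x₀)) (𝓝[>] 0) :=
        contingentDeriv_le_liminf_of_hasDerivWithinAt V hx0 hd
    _ ≤ liminf (fun t => (G t : EReal)) (𝓝[>] 0) := liminf_le_liminf hquot
    _ = _ := ((continuous_coe_real_ereal.tendsto _).comp hG).liminf_eq

theorem stmt15_general (V : EuclideanSpace ℝ (Fin n) → EReal)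
    (hbot : ∀ u, V u ≠ ⊥) (x₀ : EuclideanSpace ℝ (Fin n)) (hdom : V x₀ ≠ ⊤)
    (W : EuclideanSpace ℝ (Fin n) → ℝ≥0∞) (hW : LowerSemicontinuous W)
    (a : ℝ)
    (x : ℝ → EuclideanSpace ℝ (Fin n)) (hx0 : x 0 = x₀)
    (d : EuclideanSpace ℝ (Fin n)) (hd : HasDerivWithinAt x d (Set.Ici 0) 0)
    (hlyap : ∀ t : ℝ, 0 ≤ t →
      (Real.exp (a * t) : EReal) * V (x t)
        + ((∫⁻ τ in Set.Ioc 0 t, W (x τ)) : ℝ≥0∞) ≤ V x₀) :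
    contingentDeriv V x₀ d ≤ -((a : EReal) * V x₀) - ((W x₀ : ℝ≥0∞) : EReal) ∧
    (⨆ ξ ∈ frechetSubdiffE V x₀, ((⟪ξ, d⟫ : ℝ) : EReal)) ≤
      -((a : EReal) * V x₀) - ((W x₀ : ℝ≥0∞) : EReal) := by
  obtain ⟨v₀, hv₀⟩ : ∃ r : ℝ, V x₀ = r := ⟨_, (EReal.coe_toReal hdom (hbot x₀)).symm⟩
  have hbound : contingentDeriv V x₀ d ≤ -((a : EReal) * V x₀) - ((W x₀ : ℝ≥0∞) : EReal) := by
    rw [hv₀, ← EReal.coe_mul, ← EReal.coe_neg]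
    exact contingentDeriv_le_of_exp_mul_add_setLIntegral_le hv₀ (hW x₀) hx0 hd
      (eventually_nhdsWithin_of_forall fun t ht => hlyap t (le_of_lt ht))
  exact ⟨hbound, iSup₂_le fun ξ hξ =>
    (coe_inner_le_contingentDeriv_of_mem_frechetSubdiffE hv₀ hξ d).trans hbound⟩

/-- If a trajectory `x(·)` starting at `x₀ ∈ dom V`, right-differentiable at `0` with
derivative `d`, satisfies `e^{at}V(x(t)) + ∫₀ᵗ W(x(τ))dτ ≤ V(x₀)` for all `t ≥ 0`, then
`V′(x₀; d) ≤ −aV(x₀) − W(x₀)` and `σ_{∂_F V(x₀)}(d) ≤ −aV(x₀) − W(x₀)`. -/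
theorem stmt15 (V : EuclideanSpace ℝ (Fin n) → EReal) (hlsc : LowerSemicontinuous V)
    (hbot : ∀ u, V u ≠ ⊥) (x₀ : EuclideanSpace ℝ (Fin n)) (hdom : V x₀ ≠ ⊤)
    (W : EuclideanSpace ℝ (Fin n) → ℝ≥0∞) (hW : LowerSemicontinuous W)
    (a : ℝ) (ha : 0 ≤ a)
    (x : ℝ → EuclideanSpace ℝ (Fin n)) (hx : Continuous x) (hx0 : x 0 = x₀)
    (d : EuclideanSpace ℝ (Fin n)) (hd : HasDerivWithinAt x d (Set.Ici 0) 0)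
    (hlyap : ∀ t : ℝ, 0 ≤ t →
      (Real.exp (a * t) : EReal) * V (x t)
        + ((∫⁻ τ in Set.Ioc 0 t, W (x τ)) : ℝ≥0∞) ≤ V x₀) :
    contingentDeriv V x₀ d ≤ -((a : EReal) * V x₀) - ((W x₀ : ℝ≥0∞) : EReal) ∧
    (⨆ ξ ∈ frechetSubdiffE V x₀, ((⟪ξ, d⟫ : ℝ) : EReal)) ≤
      -((a : EReal) * V x₀) - ((W x₀ : ℝ≥0∞) : EReal) :=
  stmt15_general V hbot x₀ hdom W hW a x hx0 d hd hlyap
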